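/- Let n ≥ 2 and let g be a Lie algebra containing an n-dimensional abelian subalgebra h = ⊕ℂz'_i and elements x₁,y₁,x₂,y₂,x₃,y₃ such that: (i) ℂx₁⊕ℂy₁⊕h is a subalgebra isomorphic to b_n via x₁↦x, y₁↦y, z'₁↦z₁, z'₂↦z₂; (ii) ℂx₂⊕ℂy₂⊕h is a subalgebra isomorphic to b_n via x₂↦x, y₂↦y, z'₂↦z₁, z'₁↦z₂; (iii) ℂx₃⊕ℂy₃⊕h is a subalgebra isomorphic to b_n via x₃↦x, y₃↦y, z'₁+z'₂↦z₁; (iv) [x₁,x₂] = x₃. Then there is no compatible anti-pre-Lie algebraic structure ∘ on g satisfying x_k∘y_k ∈ h, z'_i∘x_k ∈ ℂx_k, z'_i∘y_k ∈ ℂy_k, z'_i∘z'_j ∈ h, and x_k∘x_k = y_k∘y_k = 0 for all 1 ≤ i,j ≤ n, 1 ≤ k ≤ 3. -/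
import Mathlib


/-- Theorem main: Let `g` be a Lie algebra with an `n`-dimensional
abelian subalgebra `h = ⊕ℂz'_i` (`n ≥ 2`) and elements `x₁,y₁,x₂,y₂,x₃,y₃` such that
each `ℂx_k ⊕ ℂy_k ⊕ h` is a subalgebra isomorphic to `b_n` as specified, and
`[x₁,x₂] = x₃`.  Then there is no compatible anti-pre-Lie algebraic structure `∘` on
`g` with `x_k∘y_k ∈ h`, `z'_i∘x_k ∈ ℂx_k`, `z'_i∘y_k ∈ ℂy_k`, `z'_i∘z'_j ∈ h`, and
`x_k∘x_k = y_k∘y_k = 0`. -/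
theorem stmt9 {g : Type*} [LieRing g] [LieAlgebra ℂ g]
    (n : ℕ) (hn : 2 ≤ n) (z' : Fin n → g)
    (x₁ y₁ x₂ y₂ x₃ y₃ : g)
    -- h is an n-dimensional abelian subalgebra
    (habelian : ∀ i j, ⁅z' i, z' j⁆ = 0)
    (z₁' z₂' : g) (hz₁' : z₁' = z' ⟨0, by omega⟩) (hz₂' : z₂' = z' ⟨1, by omega⟩)
    -- (i) ℂx₁ ⊕ ℂy₁ ⊕ h is a subalgebra isomorphic to b_n via
    --     x₁ ↦ x, y₁ ↦ y, z'₁ ↦ z₁, z'₂ ↦ z₂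
    (hi0 : LinearIndependent ℂ (Sum.elim ![x₁, y₁] z'))
    (hi1 : ⁅z₁', x₁⁆ = (2 : ℂ) • x₁) (hi2 : ⁅z₁', y₁⁆ = (-2 : ℂ) • y₁)
    (hi3 : ⁅x₁, y₁⁆ = z₁') (hi4 : ⁅z₂', x₁⁆ = -x₁) (hi5 : ⁅z₂', y₁⁆ = y₁)
    (hi6 : ∀ i : Fin n, 2 ≤ (i : ℕ) → ⁅z' i, x₁⁆ = 0 ∧ ⁅z' i, y₁⁆ = 0)
    -- (ii) ℂx₂ ⊕ ℂy₂ ⊕ h is a subalgebra isomorphic to b_n via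
    --      x₂ ↦ x, y₂ ↦ y, z'₂ ↦ z₁, z'₁ ↦ z₂
    (hii0 : LinearIndependent ℂ (Sum.elim ![x₂, y₂] z'))
    (hii1 : ⁅z₂', x₂⁆ = (2 : ℂ) • x₂) (hii2 : ⁅z₂', y₂⁆ = (-2 : ℂ) • y₂)
    (hii3 : ⁅x₂, y₂⁆ = z₂') (hii4 : ⁅z₁', x₂⁆ = -x₂) (hii5 : ⁅z₁', y₂⁆ = y₂)
    (hii6 : ∀ i : Fin n, 2 ≤ (i : ℕ) → ⁅z' i, x₂⁆ = 0 ∧ ⁅z' i, y₂⁆ = 0)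
    -- (iii) ℂx₃ ⊕ ℂy₃ ⊕ h is a subalgebra isomorphic to b_n via
    --       x₃ ↦ x, y₃ ↦ y, z'₁ + z'₂ ↦ z₁
    (hiii : ∃ w : Fin n → g,
      (∀ i, w i ∈ Submodule.span ℂ (Set.range z')) ∧
      w ⟨0, by omega⟩ = z₁' + z₂' ∧
      LinearIndependent ℂ (Sum.elim ![x₃, y₃] w) ∧
      ⁅w ⟨0, by omega⟩, x₃⁆ = (2 : ℂ) • x₃ ∧ ⁅w ⟨0, by omega⟩, y₃⁆ = (-2 : ℂ) • y₃ ∧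
      ⁅x₃, y₃⁆ = w ⟨0, by omega⟩ ∧
      ⁅w ⟨1, by omega⟩, x₃⁆ = -x₃ ∧ ⁅w ⟨1, by omega⟩, y₃⁆ = y₃ ∧
      ∀ i : Fin n, 2 ≤ (i : ℕ) → ⁅w i, x₃⁆ = 0 ∧ ⁅w i, y₃⁆ = 0)
    -- (iv)
    (hiv : ⁅x₁, x₂⁆ = x₃) :
    ¬ ∃ c : g →ₗ[ℂ] g →ₗ[ℂ] g,
      (∀ a b : g, c a b - c b a = ⁅a, b⁆) ∧
      (∀ a b d : g, c a (c b d) - c b (c a d) = c ⁅b, a⁆ d) ∧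
      (∀ k : Fin 3, c (![x₁, x₂, x₃] k) (![y₁, y₂, y₃] k)
        ∈ Submodule.span ℂ (Set.range z')) ∧
      (∀ (i : Fin n) (k : Fin 3),
        c (z' i) (![x₁, x₂, x₃] k) ∈ Submodule.span ℂ {![x₁, x₂, x₃] k}) ∧
      (∀ (i : Fin n) (k : Fin 3),
        c (z' i) (![y₁, y₂, y₃] k) ∈ Submodule.span ℂ {![y₁, y₂, y₃] k}) ∧
      (∀ i j : Fin n, c (z' i) (z' j) ∈ Submodule.span ℂ (Set.range z')) ∧
      (∀ k : Fin 3, c (![x₁, x₂, x₃] k) (![x₁, x₂, x₃] k) = 0 ∧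
        c (![y₁, y₂, y₃] k) (![y₁, y₂, y₃] k) = 0) := by
  rintro ⟨c, comm, ap, hxy, hzx, hzy, hzz, hsq⟩
  obtain ⟨w, hwmem, hw0eq, hwLI, hwx0, hwy0, hxy3, hwx1, hwy1, hwtail⟩ := hiii
  -- basic nonvanishing
  have hx3 : x₃ ≠ 0 := by simpa using hwLI.ne_zero (Sum.inl 0)
  have hy3 : y₃ ≠ 0 := by simpa using hwLI.ne_zero (Sum.inl 1)
  have keyx : ∀ p q : ℂ, p • x₃ = q • x₃ → p = q := fun p q h => smul_left_injective ℂ hx3 h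
  have keyy : ∀ p q : ℂ, p • y₃ = q • y₃ → p = q := fun p q h => smul_left_injective ℂ hy3 h
  -- scalars for the action of z₁', z₂' on x₁, x₂, x₃
  have hget : ∀ (u v : g), c u v ∈ Submodule.span ℂ {v} → ∃ p : ℂ, c u v = p • v := by
    intro u v hm
    obtain ⟨p, hp⟩ := Submodule.mem_span_singleton.mp hm
    exact ⟨p, hp.symm⟩
  obtain ⟨A₁, hA₁⟩ : ∃ p : ℂ, c z₁' x₁ = p • x₁ := by
    rw [hz₁']; exact hget _ _ (by simpa using hzx ⟨0, by omega⟩ 0)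
  obtain ⟨B₂, hB₂⟩ : ∃ p : ℂ, c z₁' x₂ = p • x₂ := by
    rw [hz₁']; exact hget _ _ (by simpa using hzx ⟨0, by omega⟩ 1)
  obtain ⟨s, hs⟩ : ∃ p : ℂ, c z₁' x₃ = p • x₃ := by
    rw [hz₁']; exact hget _ _ (by simpa using hzx ⟨0, by omega⟩ 2)
  obtain ⟨B₁, hB₁⟩ : ∃ p : ℂ, c z₂' x₁ = p • x₁ := by
    rw [hz₂']; exact hget _ _ (by simpa using hzx ⟨1, by omega⟩ 0)
  obtain ⟨A₂, hA₂⟩ : ∃ p : ℂ, c z₂' x₂ = p • x₂ := by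
    rw [hz₂']; exact hget _ _ (by simpa using hzx ⟨1, by omega⟩ 1)
  obtain ⟨t, ht⟩ : ∃ p : ℂ, c z₂' x₃ = p • x₃ := by
    rw [hz₂']; exact hget _ _ (by simpa using hzx ⟨1, by omega⟩ 2)
  -- brackets of z₁', z₂' with x₃ via the Jacobi identity
  have hbz1x3 : ⁅z₁', x₃⁆ = x₃ := by
    rw [← hiv, leibniz_lie, hi1, hii4, smul_lie, lie_neg, hiv]
    module
  have hbz2x3 : ⁅z₂', x₃⁆ = x₃ := by
    rw [← hiv, leibniz_lie, hi4, hii1, lie_smul, neg_lie, hiv]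
    module
  -- second-argument formulas from compatibility
  have hx1z1 : c x₁ z₁' = (A₁ - 2) • x₁ := by
    have h := comm z₁' x₁; rw [hA₁, hi1] at h
    linear_combination (norm := module) -h
  have hx2z1 : c x₂ z₁' = (B₂ + 1) • x₂ := by
    have h := comm z₁' x₂; rw [hB₂, hii4] at h
    linear_combination (norm := module) -h
  have hx3z1 : c x₃ z₁' = (s - 1) • x₃ := by
    have h := comm z₁' x₃; rw [hs, hbz1x3] at h
    linear_combination (norm := module) -h
  have hx1z2 : c x₁ z₂' = (B₁ + 1) • x₁ := by
    have h := comm z₂' x₁; rw [hB₁, hi4] at h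
    linear_combination (norm := module) -h
  have hx2z2 : c x₂ z₂' = (A₂ - 2) • x₂ := by
    have h := comm z₂' x₂; rw [hA₂, hii1] at h
    linear_combination (norm := module) -h
  have hx3z2 : c x₃ z₂' = (t - 1) • x₃ := by
    have h := comm z₂' x₃; rw [ht, hbz2x3] at h
    linear_combination (norm := module) -h
  have hQ : c x₂ x₁ = c x₁ x₂ - x₃ := by
    have h := comm x₁ x₂; rw [hiv] at h
    linear_combination (norm := module) -h
  -- c z₁' P and c z₂' P where P = c x₁ x₂
  have hcz1P : c z₁' (c x₁ x₂) = (B₂ - 2) • c x₁ x₂ := by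
    have H := ap z₁' x₁ x₂
    rw [← lie_skew x₁ z₁', hi1, hB₂, map_smul] at H
    simp only [map_neg, map_smul, LinearMap.neg_apply, LinearMap.smul_apply] at H
    linear_combination (norm := module) H
  have hcz2P : c z₂' (c x₁ x₂) = (A₂ + 1) • c x₁ x₂ := by
    have H := ap z₂' x₁ x₂
    rw [← lie_skew x₁ z₂', hi4, neg_neg, hA₂, map_smul] at H
    linear_combination (norm := module) H
  -- the four star equations
  have st1 : (B₂ - A₁ - 3) • c x₁ x₂ = (s - A₁ - 1) • x₃ := by
    have H := ap z₁' x₂ x₁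
    rw [← lie_skew x₂ z₁', hii4, neg_neg, hA₁, map_smul, hQ, map_sub, hcz1P, hs] at H
    linear_combination (norm := module) H
  have st2 : (A₂ - B₁ + 3) • c x₁ x₂ = (t - B₁ + 2) • x₃ := by
    have H := ap z₂' x₂ x₁
    rw [← lie_skew x₂ z₂', hii1, hB₁, map_smul, hQ, map_sub, hcz2P, ht] at H
    simp only [map_neg, map_smul, LinearMap.neg_apply, LinearMap.smul_apply] at H
    rw [hQ] at H
    linear_combination (norm := module) H
  have st3 : (B₂ - A₁ + 3) • c x₁ x₂ = (3 - s - A₁) • x₃ := by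
    have H := ap x₁ x₂ z₁'
    rw [← lie_skew x₂ x₁, hiv, hx2z1, hx1z1, map_smul, map_smul, hQ] at H
    simp only [map_neg, LinearMap.neg_apply] at H
    rw [hx3z1] at H
    linear_combination (norm := module) H
  have st4 : (A₂ - B₁ - 3) • c x₁ x₂ = (-t - B₁) • x₃ := by
    have H := ap x₁ x₂ z₂'
    rw [← lie_skew x₂ x₁, hiv, hx2z2, hx1z2, map_smul, map_smul, hQ] at H
    simp only [map_neg, LinearMap.neg_apply] at H
    rw [hx3z2] at H
    linear_combination (norm := module) H
  have e6 : (4 - 2*s) • x₃ = (2*t + 2) • x₃ := by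
    linear_combination (norm := module) st1 - st3 + st2 - st4
  have hst : s + t = 1 := by
    have h := keyx _ _ e6
    linear_combination -h/2
  -- now the internal analysis of the third copy of b_n
  have hax : ∀ v ∈ Submodule.span ℂ (Set.range z'), c v x₃ ∈ Submodule.span ℂ {x₃} := by
    have hle : Submodule.span ℂ (Set.range z') ≤
        Submodule.comap (c.flip x₃) (Submodule.span ℂ {x₃}) := by
      rw [Submodule.span_le]
      rintro v ⟨i, rfl⟩
      simpa using hzx i 2
    intro v hv
    simpa using hle hv
  have hay : ∀ v ∈ Submodule.span ℂ (Set.range z'), c v y₃ ∈ Submodule.span ℂ {y₃} := by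
    have hle : Submodule.span ℂ (Set.range z') ≤
        Submodule.comap (c.flip y₃) (Submodule.span ℂ {y₃}) := by
      rw [Submodule.span_le]
      rintro v ⟨i, rfl⟩
      simpa using hzy i 2
    intro v hv
    simpa using hle hv
  choose a ha using fun i => hget (w i) x₃ (hax (w i) (hwmem i))
  choose b hb using fun i => hget (w i) y₃ (hay (w i) (hwmem i))
  -- bracket eigenvalues of w i
  have hbrx : ∀ i : Fin n, ∃ ee : ℂ, ⁅w i, x₃⁆ = ee • x₃ ∧ ⁅w i, y₃⁆ = (-ee) • y₃ := by
    intro i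
    by_cases h0 : (i : ℕ) = 0
    · refine ⟨2, ?_, ?_⟩ <;> rw [show i = (⟨0, by omega⟩ : Fin n) from Fin.ext h0]
      · exact hwx0
      · exact hwy0
    · by_cases h1 : (i : ℕ) = 1
      · refine ⟨-1, ?_, ?_⟩ <;> rw [show i = (⟨1, by omega⟩ : Fin n) from Fin.ext h1]
        · rw [hwx1]; module
        · rw [hwy1]; module
      · refine ⟨0, ?_, ?_⟩
        · rw [(hwtail i (by omega)).1, zero_smul]
        · rw [(hwtail i (by omega)).2, neg_zero, zero_smul]
  choose e he using hbrx
  have he0 : e ⟨0, by omega⟩ = 2 := by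
    have h := (he ⟨0, by omega⟩).1
    rw [hwx0] at h
    exact keyx _ _ h.symm
  have hcxw : ∀ i, c x₃ (w i) = (a i - e i) • x₃ := by
    intro i
    have h := comm (w i) x₃
    rw [ha i, (he i).1] at h
    linear_combination (norm := module) -h
  have hcyw : ∀ i, c y₃ (w i) = (b i + e i) • y₃ := by
    intro i
    have h := comm (w i) y₃
    rw [hb i, (he i).2] at h
    linear_combination (norm := module) -h
  -- span of w equals span of z'
  have hz'LI : LinearIndependent ℂ z' := by
    have := hi0.comp Sum.inr Sum.inr_injective
    simpa using this
  have hwLI' : LinearIndependent ℂ w := by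
    have := hwLI.comp Sum.inr Sum.inr_injective
    simpa using this
  have hspanle : Submodule.span ℂ (Set.range w) ≤ Submodule.span ℂ (Set.range z') :=
    Submodule.span_le.mpr (by rintro v ⟨i, rfl⟩; exact hwmem i)
  haveI : FiniteDimensional ℂ (Submodule.span ℂ (Set.range z')) :=
    FiniteDimensional.span_of_finite ℂ (Set.finite_range z')
  have hspaneq : Submodule.span ℂ (Set.range w) = Submodule.span ℂ (Set.range z') :=
    Submodule.eq_of_le_of_finrank_eq hspanle
      (by rw [finrank_span_eq_card hwLI', finrank_span_eq_card hz'LI])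
  have hh0 : c x₃ y₃ ∈ Submodule.span ℂ (Set.range w) := by
    rw [hspaneq]; simpa using hxy 2
  obtain ⟨hco, hhsum⟩ := (Submodule.mem_span_range_iff_exists_fun ℂ).mp hh0
  -- expansions of c x₃ h₀ and c y₃ h₀
  have hcxh : c x₃ (c x₃ y₃) = (∑ i, hco i * (a i - e i)) • x₃ := by
    rw [← hhsum, map_sum]
    simp only [map_smul, hcxw, smul_smul]
    rw [← Finset.sum_smul]
  have hcyh : c y₃ (c x₃ y₃) = (∑ i, hco i * (b i + e i)) • y₃ := by
    rw [← hhsum, map_sum]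
    simp only [map_smul, hcyw, smul_smul]
    rw [← Finset.sum_smul]
  have hyx3 : c y₃ x₃ = c x₃ y₃ - w ⟨0, by omega⟩ := by
    have h := comm x₃ y₃; rw [hxy3] at h
    linear_combination (norm := module) -h
  have hx3x3 : c x₃ x₃ = 0 := by simpa using (hsq 2).1
  have hy3y3 : c y₃ y₃ = 0 := by simpa using (hsq 2).2
  -- E1
  have hE1 : (∑ i, hco i * (a i - e i)) = -2 := by
    have H := ap x₃ y₃ x₃
    rw [hyx3, hx3x3, map_zero, ← lie_skew y₃ x₃, hxy3, map_sub, hcxh, hcxw] at H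
    simp only [map_neg, LinearMap.neg_apply] at H
    rw [ha, he0] at H
    refine keyx _ _ ?_
    linear_combination (norm := module) H
  -- E2
  have hE2 : (∑ i, hco i * (b i + e i)) = b ⟨0, by omega⟩ := by
    have H := ap y₃ x₃ y₃
    rw [hy3y3, map_zero, hxy3, hcyh, hb] at H
    refine keyy _ _ ?_
    linear_combination (norm := module) H
  -- L1 : formula for c w₀ (w j)
  have hL1 : ∀ j, c (w ⟨0, by omega⟩) (w j)
      = (a j - e j) • (c x₃ y₃ - w ⟨0, by omega⟩) - (b j + e j) • (c x₃ y₃) := by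
    intro j
    have H := ap x₃ y₃ (w j)
    rw [hcyw j, hcxw j, map_smul, map_smul, hyx3, ← lie_skew y₃ x₃, hxy3] at H
    simp only [map_neg, LinearMap.neg_apply] at H
    linear_combination (norm := module) H
  -- R1
  have hR1 : ∀ j, b j + e j = (a ⟨0, by omega⟩ + 1) * (a j - e j) := by
    intro j
    have H := ap (w ⟨0, by omega⟩) x₃ (w j)
    rw [← lie_skew x₃ (w ⟨0, by omega⟩), hwx0, hL1 j] at H
    simp only [map_neg, map_smul, map_sub, LinearMap.neg_apply, LinearMap.smul_apply,
      hcxw, hcxh, ha, hE1, he0] at H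
    refine keyx _ _ ?_
    linear_combination (norm := module) (-1/2 : ℂ) • H
  -- R2
  have hR2 : ∀ j, a j - e j = (1 - b ⟨0, by omega⟩) * (b j + e j) := by
    intro j
    have H := ap (w ⟨0, by omega⟩) y₃ (w j)
    rw [← lie_skew y₃ (w ⟨0, by omega⟩), hwy0, hL1 j] at H
    simp only [map_neg, map_smul, map_sub, LinearMap.neg_apply, LinearMap.smul_apply,
      hcyw, hcyh, hb, hE2, he0] at H
    refine keyy _ _ ?_
    linear_combination (norm := module) (1/2 : ℂ) • H
  -- some α_j is nonzero
  obtain ⟨j, hj⟩ : ∃ j, a j - e j ≠ 0 := by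
    by_contra hno
    push_neg at hno
    rw [Finset.sum_eq_zero (fun i _ => by rw [hno i, mul_zero])] at hE1
    norm_num at hE1
  -- value of b₀
  have hb0 : b ⟨0, by omega⟩ = -2 * (a ⟨0, by omega⟩ + 1) := by
    have hsum : (∑ i, hco i * (b i + e i))
        = (a ⟨0, by omega⟩ + 1) * ∑ i, hco i * (a i - e i) := by
      rw [Finset.mul_sum]
      refine Finset.sum_congr rfl fun i _ => ?_
      rw [hR1 i]; ring
    rw [hE1] at hsum
    rw [← hE2, hsum]; ring
  -- key product identity
  have hkey : (1 - b ⟨0, by omega⟩) * (a ⟨0, by omega⟩ + 1) = 1 := by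
    have h3 : ((1 - b ⟨0, by omega⟩) * (a ⟨0, by omega⟩ + 1) - 1) * (a j - e j) = 0 := by
      linear_combination -(hR2 j) - (1 - b ⟨0, by omega⟩) * (hR1 j)
    rcases mul_eq_zero.mp h3 with h4 | h4
    · linear_combination h4
    · exact absurd h4 hj
  -- a₀ = s + t = 1
  have ha0 : a ⟨0, by omega⟩ = s + t := by
    refine keyx _ _ ?_
    rw [← ha ⟨0, by omega⟩, hw0eq, map_add, LinearMap.add_apply, hs, ht, add_smul]
  rw [hb0, ha0, hst] at hkey
  norm_num at hkey
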